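/- arXiv:0811.1455 — 3 statements merged into one kernel-verified Lean document; each statement's English description precedes it below -/
import Mathlib

section
/- Let p^{(1)},…,p^{(m)} ∈ ℝ^n, β ∈ ℝ^n, s_t ≥ 0, and define u₀ and u₀' as: u₀(x) = log(∑_i exp(⟨p^{(i)}, x⟩)), u₀'(t,x) = log(∑_i exp(⟨p^{(i)}, x − s_t β⟩)) − s_t M where M = max_i ⟨p^{(i)}, −β⟩. Then lim_{s→∞} (u₀'(t, −sβ) − u₀(−sβ)) = 0; consequently sup_{x∈ℝ^n} (u₀'(t,x) − u₀(x)) = 0. -/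
/-!
Write `c i = ⟨p⁽ⁱ⁾, -β⟩`, so that `M = max c`. Along the ray `x = -sβ` both log-sum-exps are
functions of `s` alone: `u₀(-sβ) = L s + s M` and `u₀'(t, -sβ) = L (s + s_t) + s M`, where
`L s = log ∑ exp (s c i) - s M` converges (to the log of the number of maximisers of `c`).
Hence the difference `L (s + s_t) - L s` tends to `0`. On the other hand
`⟨p⁽ⁱ⁾, x - s_t β⟩ ≤ ⟨p⁽ⁱ⁾, x⟩ + s_t M` termwise, so `u₀' ≤ u₀` everywhere, and the supremum is `0`.
-/

open Finset Filter Topology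

theorem Real.log_sum_exp_add_le {ι : Type*} {s : Finset ι} (hs : s.Nonempty) (a b : ι → ℝ)
    {B : ℝ} (hb : ∀ i ∈ s, b i ≤ B) :
    Real.log (∑ i ∈ s, Real.exp (a i + b i)) ≤ Real.log (∑ i ∈ s, Real.exp (a i)) + B := by
  have hpos : 0 < ∑ i ∈ s, Real.exp (a i) := sum_pos (fun i _ => Real.exp_pos _) hs
  calc Real.log (∑ i ∈ s, Real.exp (a i + b i))
      ≤ Real.log ((∑ i ∈ s, Real.exp (a i)) * Real.exp B) := by
        refine Real.log_le_log (sum_pos (fun i _ => Real.exp_pos _) hs) ?_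
        rw [sum_mul]
        gcongr with i hi
        rw [← Real.exp_add]
        exact Real.exp_le_exp.mpr (by linarith [hb i hi])
    _ = Real.log (∑ i ∈ s, Real.exp (a i)) + B := by
        rw [Real.log_mul hpos.ne' (Real.exp_pos B).ne', Real.log_exp]

theorem Real.tendsto_exp_mul_atTop_of_nonpos {d : ℝ} (hd : d ≤ 0) :
    Tendsto (fun t => Real.exp (t * d)) atTop (𝓝 (if d = 0 then 1 else 0)) := by
  split_ifs with h
  · simp [h]
  · exact Real.tendsto_exp_atBot.comp
      (tendsto_id.atTop_mul_const_of_neg (lt_of_le_of_ne hd h))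

theorem Real.tendsto_sum_exp_mul_sub_sup' {ι : Type*} {s : Finset ι} (hs : s.Nonempty)
    (c : ι → ℝ) :
    Tendsto (fun t => ∑ i ∈ s, Real.exp (t * (c i - s.sup' hs c))) atTop
      (𝓝 (#{i ∈ s | c i = s.sup' hs c} : ℝ)) := by
  have hlim : ∀ i ∈ s, Tendsto (fun t => Real.exp (t * (c i - s.sup' hs c))) atTop
      (𝓝 (if c i = s.sup' hs c then 1 else 0)) := fun i hi => by
    simpa only [sub_eq_zero] using
      Real.tendsto_exp_mul_atTop_of_nonpos (sub_nonpos.mpr (le_sup' c hi))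
  simpa only [sum_boole] using tendsto_finsetSum s hlim

theorem Real.tendsto_log_sum_exp_mul_sub_mul_sup' {ι : Type*} {s : Finset ι} (hs : s.Nonempty)
    (c : ι → ℝ) :
    Tendsto (fun t => Real.log (∑ i ∈ s, Real.exp (t * c i)) - t * s.sup' hs c) atTop
      (𝓝 (Real.log #{i ∈ s | c i = s.sup' hs c})) := by
  have hfactor : ∀ t, ∑ i ∈ s, Real.exp (t * c i)
      = Real.exp (t * s.sup' hs c) * ∑ i ∈ s, Real.exp (t * (c i - s.sup' hs c)) := fun t => by
    rw [mul_sum]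
    refine sum_congr rfl fun i _ => ?_
    rw [← Real.exp_add]
    ring_nf
  have hcard : (0 : ℝ) < #{i ∈ s | c i = s.sup' hs c} := by
    obtain ⟨i, hi, hmax⟩ := exists_mem_eq_sup' hs c
    exact_mod_cast card_pos.mpr ⟨i, mem_filter.mpr ⟨hi, hmax.symm⟩⟩
  have hrest := ((Real.continuousAt_log hcard.ne').tendsto.comp
    (Real.tendsto_sum_exp_mul_sub_sup' hs c))
  refine hrest.congr fun t => ?_
  have hpos : 0 < ∑ i ∈ s, Real.exp (t * (c i - s.sup' hs c)) :=
    sum_pos (fun i _ => Real.exp_pos _) hs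
  simp only [Function.comp_apply, hfactor,
    Real.log_mul (Real.exp_pos _).ne' hpos.ne', Real.log_exp]
  ring

theorem Filter.Tendsto.sub_comp_add_const {α G : Type*} [AddCommGroup α] [LinearOrder α]
    [IsOrderedAddMonoid α] [AddCommGroup G] [TopologicalSpace G] [IsTopologicalAddGroup G]
    {f : α → G} {a : G} (hf : Tendsto f atTop (𝓝 a)) (t : α) :
    Tendsto (fun s => f (s + t) - f s) atTop (𝓝 0) := by
  simpa using (hf.comp (tendsto_atTop_add_const_right _ t tendsto_id)).sub hf

theorem ciSup_eq_of_forall_le_of_tendsto {ι α β : Type*} [ConditionallyCompleteLinearOrder α]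
    [TopologicalSpace α] [OrderTopology α] {f : ι → α} {a : α} (hle : ∀ i, f i ≤ a)
    {l : Filter β} [l.NeBot] {g : β → ι} (hlim : Tendsto (f ∘ g) l (𝓝 a)) :
    ⨆ i, f i = a := by
  have : Nonempty ι := ⟨g l.nonempty_of_neBot.some⟩
  have hbdd : BddAbove (Set.range f) := ⟨a, Set.forall_mem_range.mpr hle⟩
  exact le_antisymm (ciSup_le hle)
    (le_of_tendsto hlim (Eventually.of_forall fun b => le_ciSup hbdd (g b)))

theorem stmt4_general (n m : ℕ) (hm : 0 < m) (p : Fin m → Fin n → ℝ)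
    (β : Fin n → ℝ) (st : ℝ) (hst : 0 ≤ st)
    (M : ℝ)
    (hM : M = Finset.univ.sup' (Finset.univ_nonempty_iff.mpr ⟨⟨0, hm⟩⟩)
          (fun i => ∑ j, p i j * (-β j)))
    (u₀ u₀' : (Fin n → ℝ) → ℝ)
    (hu₀ : ∀ y, u₀ y = Real.log (∑ i, Real.exp (∑ j, p i j * y j)))
    (hu₀' : ∀ y, u₀' y =
      Real.log (∑ i, Real.exp (∑ j, p i j * (y j - st * β j))) - st * M) :
    Tendsto (fun s : ℝ => u₀' (-(s • β)) - u₀ (-(s • β))) atTop (nhds 0) ∧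
    (⨆ x : Fin n → ℝ, (u₀' x - u₀ x)) = 0 := by
  set c : Fin m → ℝ := fun i => ∑ j, p i j * (-β j)
  set L : ℝ → ℝ := fun t => Real.log (∑ i, Real.exp (t * c i)) - t * M
  have hray : ∀ s : ℝ, u₀' (-(s • β)) - u₀ (-(s • β)) = L (s + st) - L s := fun s => by
    have hinner : ∀ (r : ℝ) i, ∑ j, p i j * ((-(s • β)) j - r * β j) = (s + r) * c i :=
      fun r i => by simp only [c, mul_sum]; exact sum_congr rfl fun j _ => by simp; ring
    have hinner₀ : ∀ i, ∑ j, p i j * (-(s • β)) j = s * c i := fun i => by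
      simpa using hinner 0 i
    simp only [hu₀', hu₀, hinner, hinner₀, L]
    ring
  have hlim : Tendsto (fun s : ℝ => u₀' (-(s • β)) - u₀ (-(s • β))) atTop (𝓝 0) := by
    simp only [hray]
    exact (hM ▸ Real.tendsto_log_sum_exp_mul_sub_mul_sup' _ c).sub_comp_add_const st
  have hle : ∀ x, u₀' x - u₀ x ≤ 0 := fun x => by
    have hshift : ∀ i, ∑ j, p i j * (x j - st * β j) = ∑ j, p i j * x j + st * c i :=
      fun i => by simp only [c, mul_sum, ← sum_add_distrib]; exact sum_congr rfl fun j _ => by ring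
    have := Real.log_sum_exp_add_le (univ_nonempty_iff.mpr ⟨⟨0, hm⟩⟩)
      (fun i => ∑ j, p i j * x j) (fun i => st * c i) (B := st * M)
      fun i _ => mul_le_mul_of_nonneg_left (hM ▸ le_sup' c (mem_univ i)) hst
    simp only [hu₀', hu₀, hshift]
    linarith
  exact ⟨hlim, ciSup_eq_of_forall_le_of_tendsto hle hlim⟩

theorem stmt4 (n m : ℕ) (hm : 0 < m) (p : Fin m → Fin n → ℝ)
    (β : Fin n → ℝ) (hβ : β ≠ 0) (st : ℝ) (hst : 0 ≤ st)
    (M : ℝ)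
    (hM : M = Finset.univ.sup' (Finset.univ_nonempty_iff.mpr ⟨⟨0, hm⟩⟩)
          (fun i => ∑ j, p i j * (-β j)))
    (u₀ u₀' : (Fin n → ℝ) → ℝ)
    (hu₀ : ∀ y, u₀ y = Real.log (∑ i, Real.exp (∑ j, p i j * y j)))
    (hu₀' : ∀ y, u₀' y =
      Real.log (∑ i, Real.exp (∑ j, p i j * (y j - st * β j))) - st * M) :
    Tendsto (fun s : ℝ => u₀' (-(s • β)) - u₀ (-(s • β))) atTop (nhds 0) ∧
    (⨆ x : Fin n → ℝ, (u₀' x - u₀ x)) = 0 :=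
  stmt4_general n m hm p β st hst M hM u₀ u₀' hu₀ hu₀'
end

section
/- In the setting above (p^{(i)} ∈ ℝ^n, β nonzero, K the set of maximizers of ⟨p^{(i)}, −β⟩, k₀ ∈ K with a = ⟨p^{(k₀)}, x⁰⟩ = max_{k∈K} ⟨p^{(k)}, x⁰⟩ < 0), define A_i(s) = ⟨p^{(i)}, s·x⁰ − s_t β⟩ − s_t ⟨p^{(k₀)}, −β⟩ for s_t ≥ 0. Then there exists T' > 0, depending only on the p^{(i)}, β, x⁰ (not on s, t, i), such that A_i(s) ≤ s·a for all i = 1,…,m and all s ∈ [0, s_t T']. -/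
open Finset

theorem stmt9 (n m : ℕ) (hm : 0 < m) (p : Fin m → Fin n → ℝ)
    (β : Fin n → ℝ) (hβ : β ≠ 0)
    (M : ℝ)
    (hM : M = Finset.univ.sup' (Finset.univ_nonempty_iff.mpr ⟨⟨0, hm⟩⟩)
          (fun i => ∑ j, p i j * (-β j)))
    (K : Finset (Fin m))
    (hK : K = Finset.univ.filter (fun i => (∑ j, p i j * (-β j)) = M))
    (x0 : Fin n → ℝ)
    (hneg : ∀ i ∈ K, (∑ j, p i j * x0 j) < 0)
    (a : ℝ) (k₀ : Fin m) (hk₀ : k₀ ∈ K)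
    (ha : a = ∑ j, p k₀ j * x0 j)
    (hamax : ∀ i ∈ K, (∑ j, p i j * x0 j) ≤ a) :
    ∃ T' : ℝ, 0 < T' ∧
      ∀ st : ℝ, 0 ≤ st → ∀ i : Fin m, ∀ s : ℝ, 0 ≤ s → s ≤ st * T' →
        (∑ j, p i j * (s * x0 j - st * β j)) - st * (∑ j, p k₀ j * (-β j))
          ≤ s * a := by
  have hne : (Finset.univ : Finset (Fin m)).Nonempty :=
    Finset.univ_nonempty_iff.mpr ⟨⟨0, hm⟩⟩
  set X : Fin m → ℝ := fun i => ∑ j, p i j * x0 j with hX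
  set Y : Fin m → ℝ := fun i => ∑ j, p i j * (-β j) with hY
  have hYleM : ∀ i, Y i ≤ M := by
    intro i; rw [hM]; exact Finset.le_sup' _ (Finset.mem_univ i)
  set f : Fin m → ℝ := fun i => if a < X i then (M - Y i) / (X i - a) else 1 with hf
  have hfpos : ∀ i, 0 < f i := by
    intro i
    by_cases h : a < X i
    · have hiK : i ∉ K := fun hi => absurd (hamax i hi) (not_le.mpr h)
      have hYlt : Y i < M := by
        rcases lt_or_eq_of_le (hYleM i) with h' | h'
        · exact h'
        · exact absurd (by rw [hK]; simp [hY] at h' ⊢; exact h') hiK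
      simp only [hf, if_pos h]
      exact div_pos (by linarith) (by linarith)
    · simp only [hf, if_neg h]; norm_num
  refine ⟨Finset.univ.inf' hne f, ?_, ?_⟩
  · exact (Finset.lt_inf'_iff hne).mpr fun i _ => hfpos i
  · intro st hst i s hs hsle
    have hYk : Y k₀ = M := by
      rw [hK] at hk₀; simpa [hY] using (Finset.mem_filter.mp hk₀).2
    have hsplit : (∑ j, p i j * (s * x0 j - st * β j)) = s * X i + st * Y i := by
      simp only [hX, hY, Finset.mul_sum, ← Finset.sum_add_distrib]
      exact Finset.sum_congr rfl fun j _ => by ring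
    rw [hsplit, show (∑ j, p k₀ j * (-β j)) = Y k₀ from rfl, hYk]
    by_cases h : a < X i
    · have hiK : i ∉ K := fun hi => absurd (hamax i hi) (not_le.mpr h)
      have hYlt : Y i < M := by
        rcases lt_or_eq_of_le (hYleM i) with h' | h'
        · exact h'
        · exact absurd (by rw [hK]; simp [hY] at h' ⊢; exact h') hiK
      have hTle : Finset.univ.inf' hne f ≤ f i := Finset.inf'_le _ (Finset.mem_univ i)
      have hs2 : s ≤ st * f i := le_trans hsle (by nlinarith [hfpos i])
      have hfi : f i * (X i - a) = M - Y i := by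
        simp only [hf, if_pos h]; exact div_mul_cancel₀ _ (by linarith)
      nlinarith [mul_le_mul_of_nonneg_right hs2 (le_of_lt (sub_pos.mpr h))]
    · push_neg at h
      have h1 : s * X i ≤ s * a := mul_le_mul_of_nonneg_left h hs
      have h2 : st * (Y i) ≤ st * M := mul_le_mul_of_nonneg_left (hYleM i) hst
      linarith
end

section
/- Let P* ⊂ ℝ³ be the polytope with vertices (1,0,0), (1,−1,0), (1,0,−1), (−1,2,2), (−1,−3,2), (−1,2,−3). Then the barycenter b(P*) satisfies ⟨b(P*), (1,0,0)⟩ < 0. -/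
/-!
The slice of `P*` at height `x₀ = t ∈ [-1, 1]` is the right isosceles triangle
`{(y, z) | y ≤ 1 - t, z ≤ 1 - t, -1 ≤ y + z}` with legs `3 - 2t`, so `P*` is a frustum of a
triangular pyramid. By Fubini, `∫_{P*} x₀ = ∫_{-1}^{1} t (3 - 2t)² / 2 dt = -4` and
`vol P* = ∫_{-1}^{1} (3 - 2t)² / 2 dt = 31/3`, so the first coordinate of the barycenter
is `-12/31`.
-/

open MeasureTheory Set

theorem setIntegral_prod_comp_fst {α β E : Type*} [MeasurableSpace α] [MeasurableSpace β]
    [NormedAddCommGroup E] [NormedSpace ℝ E] [CompleteSpace E]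
    {μ : Measure α} {ν : Measure β} [SFinite μ] [SFinite ν]
    {s : Set (α × β)} (hs : MeasurableSet s) {f : α → E}
    (hf : IntegrableOn (fun p => f p.1) s (μ.prod ν)) :
    ∫ p in s, f p.1 ∂μ.prod ν = ∫ x, ν.real (Prod.mk x ⁻¹' s) • f x ∂μ := by
  rw [← integral_indicator hs, integral_prod _ ((integrable_indicator_iff hs).2 hf)]
  congr 1 with x
  rw [← integral_indicator_const _ (measurable_prodMk_left hs)]
  rfl

theorem integral_indicator_Icc_mul {a b : ℝ} (hab : a ≤ b) (g f : ℝ → ℝ) :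
    ∫ t, (Icc a b).indicator g t * f t = ∫ t in a..b, g t * f t := by
  simp_rw [← indicator_mul_left]
  rw [integral_indicator measurableSet_Icc, integral_Icc_eq_integral_Ioc,
    intervalIntegral.integral_of_le hab]

def MeasurableEquiv.finThreeArrow (α : Type*) [MeasurableSpace α] : (Fin 3 → α) ≃ᵐ α × α × α :=
  (piFinSuccAbove (fun _ => α) 0).trans ((refl α).prodCongr finTwoArrow)

theorem MeasurableEquiv.finThreeArrow_apply {α : Type*} [MeasurableSpace α] (x : Fin 3 → α) :
    finThreeArrow α x = (x 0, x 1, x 2) := rfl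

theorem MeasureTheory.volume_preserving_finThreeArrow (α : Type*) [MeasureSpace α]
    [SigmaFinite (volume : Measure α)] :
    MeasurePreserving (MeasurableEquiv.finThreeArrow α) volume volume :=
  ((MeasurePreserving.id volume).prod (volume_preserving_finTwoArrow α)).comp
    (volume_preserving_piFinSuccAbove (fun _ : Fin 3 => α) 0)

def triangle (a b : ℝ) : Set (ℝ × ℝ) := {q | q.1 ≤ a ∧ q.2 ≤ a ∧ b ≤ q.1 + q.2}

def frustum : Set (ℝ × ℝ × ℝ) := {p | p.1 ∈ Icc (-1) 1 ∧ p.2 ∈ triangle (1 - p.1) (-1)}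

theorem isCompact_triangle (a b : ℝ) : IsCompact (triangle a b) := by
  have hsub : triangle a b ⊆ Icc (b - a) a ×ˢ Icc (b - a) a := by
    rintro q ⟨h1, h2, h3⟩
    exact ⟨⟨by linarith, h1⟩, ⟨by linarith, h2⟩⟩
  refine (isCompact_Icc.prod isCompact_Icc).of_isClosed_subset ?_ hsub
  simp only [triangle, ofPred_and]
  exact (isClosed_le (by fun_prop) (by fun_prop)).inter <|
    (isClosed_le (by fun_prop) (by fun_prop)).inter (isClosed_le (by fun_prop) (by fun_prop))

theorem isCompact_frustum : IsCompact frustum := by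
  have hsub : frustum ⊆ Icc (-1) 1 ×ˢ (Icc (-3) 2 ×ˢ Icc (-3) 2) := by
    rintro p ⟨⟨h1, h2⟩, h3, h4, h5⟩
    exact ⟨⟨h1, h2⟩, ⟨by linarith, by linarith⟩, ⟨by linarith, by linarith⟩⟩
  refine (isCompact_Icc.prod (isCompact_Icc.prod isCompact_Icc)).of_isClosed_subset ?_ hsub
  simp only [frustum, triangle, ofPred_and]
  exact (isClosed_Icc.preimage continuous_fst).inter <|
    (isClosed_le (by fun_prop) (by fun_prop)).inter <|
      (isClosed_le (by fun_prop) (by fun_prop)).inter (isClosed_le (by fun_prop) (by fun_prop))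

theorem measureReal_slice_triangle (a b y : ℝ) :
    volume.real (Prod.mk y ⁻¹' triangle a b) =
      (Icc (b - a) a).indicator (fun y => y - (b - a)) y := by
  by_cases hy : y ≤ a
  · have hslice : Prod.mk y ⁻¹' triangle a b = Icc (b - y) a := by
      ext z
      simp only [triangle, mem_preimage, mem_ofPred_eq, mem_Icc]
      constructor
      · rintro ⟨-, h2, h3⟩; exact ⟨by linarith, h2⟩
      · rintro ⟨h1, h2⟩; exact ⟨hy, h2, by linarith⟩
    rw [hslice, Real.volume_real_Icc, indicator_apply]
    split_ifs with h
    · rw [max_eq_left (by linarith [h.1])]; ring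
    · have hlt : y < b - a := lt_of_not_ge fun h' => h ⟨h', hy⟩
      rw [max_eq_right (by linarith)]
  · have hslice : Prod.mk y ⁻¹' triangle a b = ∅ := by
      ext z; simp only [triangle, mem_preimage, mem_ofPred_eq, mem_empty_iff_false, iff_false]
      exact fun h => hy h.1
    rw [hslice, measureReal_empty, indicator_of_notMem (fun h => hy h.2)]

theorem measureReal_triangle {a b : ℝ} (h : b ≤ 2 * a) :
    volume.real (triangle a b) = (2 * a - b) ^ 2 / 2 := by
  have hmeas := (isCompact_triangle a b).measurableSet
  rw [← setIntegral_one_eq_measureReal, Measure.volume_eq_prod,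
    setIntegral_prod_comp_fst hmeas (f := fun _ => (1 : ℝ))
      (integrableOn_const (isCompact_triangle a b).measure_lt_top.ne)]
  simp_rw [measureReal_slice_triangle, smul_eq_mul]
  rw [integral_indicator_Icc_mul (by linarith)]
  simp only [mul_one, intervalIntegral.integral_comp_sub_right (fun y => y), integral_id]
  ring

theorem measureReal_slice_frustum (t : ℝ) :
    volume.real (Prod.mk t ⁻¹' frustum) =
      (Icc (-1) 1).indicator (fun t => (3 - 2 * t) ^ 2 / 2) t := by
  by_cases ht : t ∈ Icc (-1) 1
  · have hslice : Prod.mk t ⁻¹' frustum = triangle (1 - t) (-1) := by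
      ext q; simp only [frustum, mem_preimage, mem_ofPred_eq, ht, true_and]
    rw [hslice, measureReal_triangle (by linarith [ht.2]), indicator_of_mem ht]
    ring
  · have hslice : Prod.mk t ⁻¹' frustum = ∅ := by
      ext q; simp only [frustum, mem_preimage, mem_ofPred_eq, ht, false_and, mem_empty_iff_false]
    rw [hslice, measureReal_empty, indicator_of_notMem ht]

theorem setIntegral_frustum_comp_fst {f : ℝ → ℝ} (hf : Continuous f) :
    ∫ p in frustum, f p.1 = ∫ t in (-1)..1, (3 - 2 * t) ^ 2 / 2 * f t := by
  have hint : IntegrableOn (fun p : ℝ × ℝ × ℝ => f p.1) frustum :=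
    (hf.comp continuous_fst).continuousOn.integrableOn_compact isCompact_frustum
  rw [Measure.volume_eq_prod] at hint ⊢
  rw [setIntegral_prod_comp_fst isCompact_frustum.measurableSet hint]
  simp_rw [measureReal_slice_frustum, smul_eq_mul]
  exact integral_indicator_Icc_mul (by norm_num) _ _

theorem setIntegral_frustum_fst : ∫ p in frustum, p.1 = -4 := by
  rw [setIntegral_frustum_comp_fst (f := fun t => t) continuous_id]
  have : ∀ x : ℝ, (3 - 2 * x) ^ 2 / 2 * x = 9/2 * x - 6 * x^2 + 2 * x^3 := fun x => by ring
  simp only [this]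
  rw [intervalIntegral.integral_add, intervalIntegral.integral_sub,
    intervalIntegral.integral_const_mul, intervalIntegral.integral_const_mul,
    intervalIntegral.integral_const_mul]
  all_goals first | exact (by fun_prop : Continuous _).intervalIntegrable _ _ | norm_num

theorem measureReal_frustum : volume.real frustum = 31 / 3 := by
  rw [← setIntegral_one_eq_measureReal,
    setIntegral_frustum_comp_fst (f := fun _ => 1) continuous_const]
  have : ∀ x : ℝ, (3 - 2 * x) ^ 2 / 2 * 1 = 9/2 - 6 * x + 2 * x^2 := fun x => by ring
  simp only [this]
  rw [intervalIntegral.integral_add, intervalIntegral.integral_sub,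
    intervalIntegral.integral_const_mul, intervalIntegral.integral_const_mul]
  all_goals first | exact (by fun_prop : Continuous _).intervalIntegrable _ _ | norm_num

theorem convexHull_vertices_subset_frustum :
    convexHull ℝ ({![1, 0, 0], ![1, -1, 0], ![1, 0, -1],
        ![-1, 2, 2], ![-1, -3, 2], ![-1, 2, -3]} : Set (Fin 3 → ℝ)) ⊆
      MeasurableEquiv.finThreeArrow ℝ ⁻¹' frustum := by
  refine convexHull_min ?_ ?_
  · simp only [insert_subset_iff, singleton_subset_iff, mem_preimage,
      MeasurableEquiv.finThreeArrow_apply, Matrix.cons_val]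
    norm_num [frustum, triangle]
  · rintro x ⟨⟨hx1, hx2⟩, hx3, hx4, hx5⟩ y ⟨⟨hy1, hy2⟩, hy3, hy4, hy5⟩ a b ha hb hab
    simp only [mem_preimage, MeasurableEquiv.finThreeArrow_apply, frustum, triangle, mem_Icc,
      mem_ofPred_eq, Pi.add_apply, Pi.smul_apply, smul_eq_mul] at *
    refine ⟨⟨?_, ?_⟩, ?_, ?_, ?_⟩ <;> nlinarith

theorem frustum_subset_convexHull_vertices :
    MeasurableEquiv.finThreeArrow ℝ ⁻¹' frustum ⊆
      convexHull ℝ ({![1, 0, 0], ![1, -1, 0], ![1, 0, -1],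
        ![-1, 2, 2], ![-1, -3, 2], ![-1, 2, -3]} : Set (Fin 3 → ℝ)) := by
  rintro x ⟨⟨h1, h2⟩, hy, hz, hyz⟩
  simp only [MeasurableEquiv.finThreeArrow_apply] at h1 h2 hy hz hyz
  have hL : 0 < 3 - 2 * x 0 := by linarith
  set L := 3 - 2 * x 0
  -- barycentric coordinates of `(x 1, x 2)` in the slice triangle, split between the top face
  -- `x₀ = 1` and the bottom face `x₀ = -1` in the ratio `(1 + x₀) : (1 - x₀)`
  let μ : Fin 3 → ℝ := ![(1 + x 1 + x 2) / L, (1 - x 0 - x 1) / L, (1 - x 0 - x 2) / L]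
  let w : Fin 6 → ℝ := ![μ 0 * ((1 + x 0) / 2), μ 1 * ((1 + x 0) / 2), μ 2 * ((1 + x 0) / 2),
    μ 0 * ((1 - x 0) / 2), μ 1 * ((1 - x 0) / 2), μ 2 * ((1 - x 0) / 2)]
  let v : Fin 6 → Fin 3 → ℝ := ![![1, 0, 0], ![1, -1, 0], ![1, 0, -1],
    ![-1, 2, 2], ![-1, -3, 2], ![-1, 2, -3]]
  have hw : ∀ i ∈ Finset.univ, 0 ≤ w i := by
    intro i _
    fin_cases i <;> exact mul_nonneg (div_nonneg (by linarith) hL.le) (by linarith)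
  have hw_sum : ∑ i, w i = 1 := by
    simp only [Fin.sum_univ_six, w, μ, Matrix.cons_val_zero, Matrix.cons_val_one, Matrix.cons_val]
    field_simp
    ring
  have hv : ∀ i ∈ Finset.univ, v i ∈ ({![1, 0, 0], ![1, -1, 0], ![1, 0, -1],
      ![-1, 2, 2], ![-1, -3, 2], ![-1, 2, -3]} : Set (Fin 3 → ℝ)) := by
    intro i _
    fin_cases i <;> simp [v]
  convert (convex_convexHull ℝ _).sum_mem hw hw_sum fun i hi => subset_convexHull ℝ _ (hv i hi)
  funext j
  fin_cases j <;>
    simp only [Finset.sum_apply, Pi.smul_apply, smul_eq_mul, Fin.sum_univ_six, w, μ, v,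
      Fin.isValue, Fin.zero_eta, Fin.mk_one, Fin.reduceFinMk, Matrix.cons_val_zero,
      Matrix.cons_val_one, Matrix.cons_val, Matrix.cons_val', Matrix.cons_val_fin_one] <;>
    field_simp <;> ring

theorem stmt15
    (Pstar : Set (Fin 3 → ℝ))
    (hPstar : Pstar = convexHull ℝ
      ({![1, 0, 0], ![1, -1, 0], ![1, 0, -1],
        ![-1, 2, 2], ![-1, -3, 2], ![-1, 2, -3]} : Set (Fin 3 → ℝ))) :
    (∫ y in Pstar, y 0) / (volume Pstar).toReal < 0 := by
  have he := volume_preserving_finThreeArrow ℝ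
  have hint : ∫ y in MeasurableEquiv.finThreeArrow ℝ ⁻¹' frustum, y 0 = -4 :=
    (he.setIntegral_preimage_emb (MeasurableEquiv.measurableEmbedding _) (fun p => p.1) _).trans
      setIntegral_frustum_fst
  rw [hPstar, convexHull_vertices_subset_frustum.antisymm frustum_subset_convexHull_vertices,
    ← measureReal_def, he.measureReal_preimage isCompact_frustum.measurableSet.nullMeasurableSet,
    measureReal_frustum, hint]
  norm_num
end
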